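/- Let F be a Schwartz function on ℝ^d and φ a Schwartz function, and suppose F = F * φ̂ (convolution). Define F^#(x) = sup_{|y-x| ≤ δ} |F(y)| and (φ̂)^#(x) = sup_{|y-x| ≤ δ} |φ̂(y)|. Then ‖F^#‖_{L²} ≤ ‖(φ̂)^#‖_{L¹} · ‖F‖_{L²}. -/

import Mathlib

/-! Since `F = F * φ̂`, for `|y - x| ≤ δ` we get `|F y| ≤ ∫ |F z| |φ̂ (y - z)| dz`, and
`y - z` lies within `δ` of `x - z`, so `F^# ≤ |F| * (φ̂)^#` pointwise. It remains to apply Young's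
inequality `‖f * g‖₂ ≤ ‖g‖₁ ‖f‖₂`, which follows from Cauchy–Schwarz against the weight
`g (x - ·)` and Tonelli. All of this is done with `ℝ≥0∞`-valued functions; `(φ̂)^#` is
measurable because it is lower semicontinuous. -/

open MeasureTheory Metric Set FourierTransform
open scoped ENNReal

theorem ENNReal.lintegral_mul_sq_le {α : Type*} [MeasurableSpace α] {μ : Measure α}
    {f w : α → ℝ≥0∞} (hf : AEMeasurable f μ) (hw : AEMeasurable w μ) :
    (∫⁻ a, f a * w a ∂μ) ^ 2 ≤ (∫⁻ a, f a ^ 2 * w a ∂μ) * ∫⁻ a, w a ∂μ := by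
  have hsqrt : ∀ a, (f a ^ 2 * w a) ^ (2⁻¹ : ℝ) * w a ^ (2⁻¹ : ℝ) = f a * w a := by
    intro a
    rw [← ENNReal.mul_rpow_of_nonneg _ _ (by norm_num), mul_assoc, ← pow_two, ← mul_pow,
      ← ENNReal.rpow_natCast, ← ENNReal.rpow_mul]
    norm_num
  have h := ENNReal.lintegral_mul_norm_pow_le ((hf.pow_const 2).mul hw) hw
    (p := 2⁻¹) (q := 2⁻¹) (by norm_num) (by norm_num) (by norm_num)
  simp only [Pi.mul_apply, hsqrt] at h
  calc (∫⁻ a, f a * w a ∂μ) ^ 2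
      ≤ ((∫⁻ a, f a ^ 2 * w a ∂μ) ^ (2⁻¹ : ℝ) * (∫⁻ a, w a ∂μ) ^ (2⁻¹ : ℝ)) ^ 2 := by gcongr
    _ = (∫⁻ a, f a ^ 2 * w a ∂μ) * ∫⁻ a, w a ∂μ := by
      have hsq := ENNReal.rpow_inv_natCast_pow (n := 2) two_ne_zero
      push_cast at hsq
      rw [mul_pow, hsq, hsq]

section Young

variable {G : Type*} [AddCommGroup G] [MeasurableSpace G] [MeasurableAdd₂ G] [MeasurableNeg G]
  {μ : Measure G} [SFinite μ] [μ.IsAddLeftInvariant] [μ.IsNegInvariant] {f g : G → ℝ≥0∞}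

theorem lintegral_lconvolution_sq_le (hf : AEMeasurable f μ) (hg : Measurable g) :
    ∫⁻ x, (f ⋆ₗ[μ] g) x ^ 2 ∂μ ≤ (∫⁻ x, g x ∂μ) ^ 2 * ∫⁻ x, f x ^ 2 ∂μ := by
  obtain ⟨f', hf', hff'⟩ := hf
  have hconv : f ⋆ₗ[μ] g = f' ⋆ₗ[μ] g :=
    funext fun x => lintegral_congr_ae (hff'.mono fun z hz => by simp only [hz])
  have hsq : ∫⁻ x, f x ^ 2 ∂μ = ∫⁻ x, f' x ^ 2 ∂μ :=
    lintegral_congr_ae (hff'.mono fun z hz => by simp only [hz])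
  rw [hconv, hsq]
  have hreflect : ∀ x, ∫⁻ z, g (-z + x) ∂μ = ∫⁻ x, g x ∂μ := fun x => by
    simpa only [neg_add_eq_sub] using lintegral_sub_left_eq_self g x
  calc ∫⁻ x, (f' ⋆ₗ[μ] g) x ^ 2 ∂μ
      ≤ ∫⁻ x, (∫⁻ z, f' z ^ 2 * g (-z + x) ∂μ) * ∫⁻ x, g x ∂μ ∂μ := by
        refine lintegral_mono fun x => ?_
        rw [lconvolution_def, ← hreflect x]
        exact ENNReal.lintegral_mul_sq_le hf'.aemeasurable (by fun_prop)
    _ = (∫⁻ z, f' z ^ 2 * ∫⁻ x, g (-z + x) ∂μ ∂μ) * ∫⁻ x, g x ∂μ := by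
        rw [lintegral_mul_const _ (by fun_prop), lintegral_lintegral_swap (by fun_prop)]
        congr 1
        refine lintegral_congr fun z => lintegral_const_mul _ (by fun_prop)
    _ = (∫⁻ x, g x ∂μ) ^ 2 * ∫⁻ x, f' x ^ 2 ∂μ := by
        simp_rw [lintegral_add_left_eq_self,
          lintegral_mul_const _ (by fun_prop : Measurable fun z => f' z ^ 2)]
        ring

theorem eLpNorm_lconvolution_le (hf : AEMeasurable f μ) (hg : Measurable g) :
    eLpNorm (f ⋆ₗ[μ] g) 2 μ ≤ (∫⁻ x, g x ∂μ) * eLpNorm f 2 μ := by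
  simp only [eLpNorm_eq_lintegral_rpow_enorm_toReal two_ne_zero ENNReal.ofNat_ne_top,
    enorm_eq_self, ENNReal.toReal_ofNat, ENNReal.rpow_two]
  calc (∫⁻ x, (f ⋆ₗ[μ] g) x ^ 2 ∂μ) ^ (1 / 2 : ℝ)
      ≤ ((∫⁻ x, g x ∂μ) ^ 2 * ∫⁻ x, f x ^ 2 ∂μ) ^ (1 / 2 : ℝ) := by
        gcongr
        exact lintegral_lconvolution_sq_le hf hg
    _ = (∫⁻ x, g x ∂μ) * (∫⁻ x, f x ^ 2 ∂μ) ^ (1 / 2 : ℝ) := by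
        rw [ENNReal.mul_rpow_of_nonneg _ _ (by norm_num), ← ENNReal.rpow_two, ← ENNReal.rpow_mul]
        norm_num

end Young

section BallSup

variable {E : Type*}

/-- The paper's `g^#`, taken in `ℝ≥0∞` so that no boundedness is needed for it to be meaningful. -/
noncomputable def ballSup [PseudoMetricSpace E] (δ : ℝ) (g : E → ℝ≥0∞) (x : E) : ℝ≥0∞ :=
  ⨆ y ∈ closedBall x δ, g y

theorem le_ballSup [PseudoMetricSpace E] {δ : ℝ} {g : E → ℝ≥0∞} {x y : E}
    (hy : y ∈ closedBall x δ) : g y ≤ ballSup δ g x :=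
  le_iSup₂ (f := fun y (_ : y ∈ closedBall x δ) => g y) y hy

theorem ballSup_eq_biSup_add [SeminormedAddCommGroup E] (δ : ℝ) (g : E → ℝ≥0∞) (x : E) :
    ballSup δ g x = ⨆ u ∈ closedBall (0 : E) δ, g (x + u) := by
  refine le_antisymm (iSup₂_le fun y hy => ?_) (iSup₂_le fun u hu => ?_)
  · refine le_iSup₂_of_le (y - x) ?_ (by rw [add_sub_cancel])
    rwa [mem_closedBall, dist_zero_right, ← dist_eq_norm]
  · refine le_ballSup ?_
    rwa [mem_closedBall, dist_eq_norm, add_sub_cancel_left, ← dist_zero_right]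

theorem lowerSemicontinuous_ballSup [SeminormedAddCommGroup E] {g : E → ℝ≥0∞}
    (hg : Continuous g) (δ : ℝ) : LowerSemicontinuous (ballSup δ g) := by
  simp_rw [funext (ballSup_eq_biSup_add δ g)]
  exact lowerSemicontinuous_biSup fun u _ => (hg.comp (continuous_add_const u)).lowerSemicontinuous

end BallSup

section NormSup

variable {α F : Type*} [SeminormedAddGroup F] (s : Set α) (G : α → F)

theorem enorm_biSup_norm_le : ‖⨆ y ∈ s, ‖G y‖‖ₑ ≤ ⨆ y ∈ s, ‖G y‖ₑ := by
  have hnonneg : 0 ≤ ⨆ y ∈ s, ‖G y‖ :=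
    Real.iSup_nonneg fun y => Real.iSup_nonneg fun _ => norm_nonneg _
  rw [Real.enorm_eq_ofReal hnonneg]
  by_cases htop : (⨆ y ∈ s, ‖G y‖ₑ) = ⊤
  · simp [htop]
  rw [ENNReal.ofReal_le_iff_le_toReal htop]
  refine Real.iSup_le (fun y => Real.iSup_le (fun hy => ?_) ENNReal.toReal_nonneg)
    ENNReal.toReal_nonneg
  simpa only [toReal_enorm] using
    ENNReal.toReal_mono htop (le_iSup₂ (f := fun y (_ : y ∈ s) => ‖G y‖ₑ) y hy)

variable {G} in
theorem enorm_biSup_norm (hG : BddAbove (range fun y => ‖G y‖)) :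
    ‖⨆ y ∈ s, ‖G y‖‖ₑ = ⨆ y ∈ s, ‖G y‖ₑ := by
  refine le_antisymm (enorm_biSup_norm_le s G) (iSup₂_le fun y hy => ?_)
  obtain ⟨C, hC⟩ := hG
  have hbdd : BddAbove (range fun y => ⨆ _ : y ∈ s, ‖G y‖) :=
    ⟨C, forall_mem_range.2 fun z =>
      Real.iSup_le (fun _ => hC ⟨z, rfl⟩) ((norm_nonneg _).trans (hC ⟨y, rfl⟩))⟩
  refine enorm_le_iff_norm_le.2 (le_trans ?_ (Real.le_norm_self _))
  calc ‖G y‖ = ⨆ _ : y ∈ s, ‖G y‖ := (ciSup_pos (f := fun _ => ‖G y‖) hy).symm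
    _ ≤ ⨆ y ∈ s, ‖G y‖ := le_ciSup hbdd y

end NormSup

section MaximalConvolution

variable {E A : Type*} [NormedAddCommGroup E] [MeasurableSpace E] {μ : Measure E}
  [NormedRing A] [NormedSpace ℝ A] {F K : E → A}

theorem ballSup_enorm_le_lconvolution (hconv : ∀ x, F x = ∫ y, F y * K (x - y) ∂μ)
    (δ : ℝ) (x : E) :
    ballSup δ (‖F ·‖ₑ) x ≤ ((‖F ·‖ₑ) ⋆ₗ[μ] ballSup δ (‖K ·‖ₑ)) x := by
  refine iSup₂_le fun y hy => ?_
  calc ‖F y‖ₑ = ‖∫ z, F z * K (y - z) ∂μ‖ₑ := by rw [← hconv]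
    _ ≤ ∫⁻ z, ‖F z * K (y - z)‖ₑ ∂μ := enorm_integral_le_lintegral_enorm _
    _ ≤ ∫⁻ z, ‖F z‖ₑ * ‖K (y - z)‖ₑ ∂μ := lintegral_mono fun z => by
      simpa only [enorm_eq_nnnorm, ← ENNReal.coe_mul] using
        ENNReal.coe_le_coe.2 (nnnorm_mul_le (F z) (K (y - z)))
    _ ≤ ∫⁻ z, ‖F z‖ₑ * ballSup δ (‖K ·‖ₑ) (-z + x) ∂μ := by
      refine lintegral_mono fun z => ?_
      gcongr
      refine le_ballSup ?_
      rwa [neg_add_eq_sub, mem_closedBall, dist_sub_right]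

theorem eLpNorm_biSup_closedBall_le [BorelSpace E] [SecondCountableTopology E] [SFinite μ]
    [μ.IsAddLeftInvariant] [μ.IsNegInvariant] (hF : AEStronglyMeasurable F μ)
    (hK : Continuous K) (hKb : BddAbove (range fun y => ‖K y‖))
    (hconv : ∀ x, F x = ∫ y, F y * K (x - y) ∂μ) (δ : ℝ) :
    eLpNorm (fun x => ⨆ y ∈ closedBall x δ, ‖F y‖) 2 μ ≤
      eLpNorm (fun x => ⨆ y ∈ closedBall x δ, ‖K y‖) 1 μ * eLpNorm F 2 μ := by
  have hKsup : Measurable (ballSup δ (‖K ·‖ₑ)) :=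
    (lowerSemicontinuous_ballSup hK.enorm δ).measurable
  calc eLpNorm (fun x => ⨆ y ∈ closedBall x δ, ‖F y‖) 2 μ
      ≤ eLpNorm (ballSup δ (‖F ·‖ₑ)) 2 μ :=
        eLpNorm_mono_enorm fun x => enorm_biSup_norm_le _ _
    _ ≤ eLpNorm ((‖F ·‖ₑ) ⋆ₗ[μ] ballSup δ (‖K ·‖ₑ)) 2 μ :=
        eLpNorm_mono_enorm fun x => ballSup_enorm_le_lconvolution hconv δ x
    _ ≤ (∫⁻ x, ballSup δ (‖K ·‖ₑ) x ∂μ) * eLpNorm (‖F ·‖ₑ) 2 μ :=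
        eLpNorm_lconvolution_le hF.enorm hKsup
    _ = eLpNorm (fun x => ⨆ y ∈ closedBall x δ, ‖K y‖) 1 μ * eLpNorm F 2 μ := by
        rw [eLpNorm_one_eq_lintegral_enorm, eLpNorm_enorm]
        simp_rw [enorm_biSup_norm _ hKb]
        rfl

end MaximalConvolution

theorem stmt8_general {d : ℕ} (δ : ℝ)
    (F φ : SchwartzMap (EuclideanSpace ℝ (Fin d)) ℂ)
    (φhat : EuclideanSpace ℝ (Fin d) → ℂ)
    (hφhat : ∀ ξ, φhat ξ =
      ∫ y, Complex.exp (-2 * Real.pi * Complex.I * ((inner ℝ ξ y : ℝ) : ℂ)) * φ y)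
    (hconv : ∀ x, F x = ∫ y, F y * φhat (x - y)) :
    eLpNorm (fun x => ⨆ y ∈ Metric.closedBall x δ, ‖F y‖) 2 volume ≤
      eLpNorm (fun x => ⨆ y ∈ Metric.closedBall x δ, ‖φhat y‖) 1 volume *
        eLpNorm (fun x => F x) 2 volume := by
  have hφhat_eq : φhat = 𝓕 φ := by
    ext ξ
    rw [hφhat, SchwartzMap.fourier_coe, Real.fourier_eq']
    congr 1 with y
    rw [real_inner_comm, smul_eq_mul]
    push_cast
    ring_nf
  subst hφhat_eq
  exact eLpNorm_biSup_closedBall_le F.continuous.aestronglyMeasurable (𝓕 φ).continuous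
    ⟨_, forall_mem_range.2 fun y => (𝓕 φ).norm_le_seminorm ℝ y⟩ hconv δ

theorem stmt8 {d : ℕ} (hd : 0 < d) (δ : ℝ) (hδ : 0 < δ)
    (F φ : SchwartzMap (EuclideanSpace ℝ (Fin d)) ℂ)
    (φhat : EuclideanSpace ℝ (Fin d) → ℂ)
    (hφhat : ∀ ξ, φhat ξ =
      ∫ y, Complex.exp (-2 * Real.pi * Complex.I * ((inner ℝ ξ y : ℝ) : ℂ)) * φ y)
    (hconv : ∀ x, F x = ∫ y, F y * φhat (x - y)) :
    eLpNorm (fun x => ⨆ y ∈ Metric.closedBall x δ, ‖F y‖) 2 volume ≤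
      eLpNorm (fun x => ⨆ y ∈ Metric.closedBall x δ, ‖φhat y‖) 1 volume *
        eLpNorm (fun x => F x) 2 volume :=
  stmt8_general δ F φ φhat hφhat hconv
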